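/- arXiv:2010.01228 — 6 statements merged into one kernel-verified Lean document; each statement's English description precedes it below -/
import Mathlib

section
/- Let n > 2 be an integer. If H is a 3-uniform hypergraph of order n with clique number ω(H) = n − 2 = k ≥ 3 such that the intersection of all maximum cliques of H is empty, then n ≤ 6. -/
/-!
Suppose `n ≥ 7`. For each vertex `v` a maximum clique avoiding `v` misses exactly one further
vertex `p v`, so every non-edge `t` satisfies `p (tᶜ) ⊆ t`. Hence two disjoint non-edges would
cover all `n` vertices, so the non-edges form an intersecting family. Two non-edges `a, b`
cannot meet in a single point `y`: the `≥ 2` vertices outside `a ∪ b` are sent to `y`, so a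
non-edge avoiding `y` contains both of them and meets `a` and `b` in its third vertex, which
must then be `y`. Finally, pigeonholing the `n - 3 ≥ 4` vertices outside a non-edge `a` into `a`
gives `z ≠ z'` with `p z = p z'`; a non-edge avoiding `p z` contains `z, z'` and therefore
meets `a` in exactly one point.
-/

open Finset

/-- `S` is a clique of the 3-uniform hypergraph with edge set `E`:
every 3-element subset of `S` is an edge. -/
def IsClique3 {α : Type*} (E : Finset (Finset α)) (S : Finset α) : Prop :=
  ∀ t : Finset α, t ⊆ S → t.card = 3 → t ∈ E

def nonEdges {α : Type*} (E : Finset (Finset α)) : Set (Finset α) :=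
  {t | t.card = 3 ∧ t ∉ E}

theorem card_sdiff_pair_of_card_eq_three {α : Type*} [DecidableEq α] {t : Finset α} {z z' : α}
    (ht : t.card = 3) (hz : z ∈ t) (hz' : z' ∈ t) (hzz' : z ≠ z') : (t \ {z, z'}).card = 1 := by
  rw [card_sdiff_of_subset (insert_subset hz (singleton_subset_iff.mpr hz')), ht, card_pair hzz']

section MapsToCompl

variable {α : Type*} [Fintype α] [DecidableEq α] {N : Set (Finset α)} {p : α → α}

theorem intersecting_of_mapsTo_compl (hN : ∀ t ∈ N, t.card = 3)
    (hp : ∀ t ∈ N, Set.MapsTo p (↑t)ᶜ ↑t) (hcard : 6 < Fintype.card α) : N.Intersecting := by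
  intro a ha b hb hab
  have hcover : (univ : Finset α) ⊆ a ∪ b := by
    intro v _
    by_contra hv
    rw [mem_union, not_or] at hv
    exact disjoint_left.mp hab (hp a ha hv.1) (hp b hb hv.2)
  have := (card_le_card hcover).trans (card_union_le a b)
  rw [card_univ, hN a ha, hN b hb] at this
  omega

theorem card_inter_ne_one (hN : ∀ t ∈ N, t.card = 3)
    (hp : ∀ t ∈ N, Set.MapsTo p (↑t)ᶜ ↑t) (havoid : ∀ s, ∃ t ∈ N, s ∉ t)
    (hcard : 6 < Fintype.card α) {a b : Finset α} (ha : a ∈ N) (hb : b ∈ N) :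
    (a ∩ b).card ≠ 1 := by
  intro h1
  obtain ⟨y, hy⟩ := card_eq_one.mp h1
  have hout : 1 < (a ∪ b)ᶜ.card := by
    have := card_union_add_card_inter a b
    rw [hN a ha, hN b hb, h1] at this
    rw [card_compl]
    omega
  obtain ⟨z, hz, z', hz', hzz'⟩ := one_lt_card.mp hout
  have hpy : ∀ x ∈ (a ∪ b)ᶜ, p x = y := by
    intro x hx
    rw [mem_compl, mem_union, not_or] at hx
    have : p x ∈ a ∩ b := mem_inter.mpr ⟨hp a ha hx.1, hp b hb hx.2⟩
    simpa [hy] using this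
  obtain ⟨c, hc, hyc⟩ := havoid y
  have hmem : ∀ x ∈ (a ∪ b)ᶜ, x ∈ c := fun x hx => by
    by_contra h
    exact hyc (hpy x hx ▸ hp c hc h)
  have hthird := card_sdiff_pair_of_card_eq_three (hN c hc) (hmem z hz) (hmem z' hz') hzz'
  have hmeet : ∀ d ∈ N, z ∉ d → z' ∉ d → ∃ u ∈ c \ {z, z'}, u ∈ d := by
    intro d hd hzd hz'd
    obtain ⟨u, huc, hud⟩ := not_disjoint_iff.mp (intersecting_of_mapsTo_compl hN hp hcard hc hd)
    refine ⟨u, mem_sdiff.mpr ⟨huc, ?_⟩, hud⟩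
    rw [mem_insert, mem_singleton]
    rintro (rfl | rfl) <;> contradiction
  rw [mem_compl, mem_union, not_or] at hz hz'
  obtain ⟨u, hu, hua⟩ := hmeet a ha hz.1 hz'.1
  obtain ⟨u', hu', hub⟩ := hmeet b hb hz.2 hz'.2
  have huy : u ∈ a ∩ b := mem_inter.mpr ⟨hua, card_le_one.mp hthird.le u hu u' hu' ▸ hub⟩
  rw [hy, mem_singleton] at huy
  exact hyc (huy ▸ (mem_sdiff.mp hu).1)

theorem card_le_six_of_mapsTo_compl (hN : ∀ t ∈ N, t.card = 3)
    (hp : ∀ t ∈ N, Set.MapsTo p (↑t)ᶜ ↑t) (havoid : ∀ s, ∃ t ∈ N, s ∉ t) :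
    Fintype.card α ≤ 6 := by
  by_contra! hcard
  obtain ⟨v⟩ : Nonempty α := Fintype.card_pos_iff.mp (by omega)
  obtain ⟨a, ha, -⟩ := havoid v
  obtain ⟨z, hz, z', hz', hzz', hpz⟩ := exists_ne_map_eq_of_card_lt_of_maps_to
    (s := aᶜ) (t := a) (by rw [card_compl, hN a ha]; omega)
    (fun x hx => hp a ha (by simpa using hx))
  obtain ⟨b, hb, hzb⟩ := havoid (p z)
  have hmem : ∀ x, p x = p z → x ∈ b := fun x hx => by
    by_contra h
    exact hzb (hx ▸ hp b hb h)
  have hsub : a ∩ b ⊆ b \ {z, z'} := by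
    intro x hx
    rw [mem_compl] at hz hz'
    refine mem_sdiff.mpr ⟨(mem_inter.mp hx).2, ?_⟩
    rw [mem_insert, mem_singleton]
    rintro (rfl | rfl) <;> simp_all
  have hle := (card_le_card hsub).trans
    (card_sdiff_pair_of_card_eq_three (hN b hb) (hmem z rfl) (hmem z' hpz.symm) hzz').le
  have hpos : 0 < (a ∩ b).card := card_pos.mpr <|
    not_disjoint_iff_nonempty_inter.mp (intersecting_of_mapsTo_compl hN hp hcard ha hb)
  exact card_inter_ne_one hN hp havoid hcard ha hb (by omega)

end MapsToCompl

section Hypergraph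

variable {α : Type*} [Fintype α] [DecidableEq α] {E : Finset (Finset α)}

theorem IsClique3.exists_mem_of_notMem {S : Finset α} (hS : IsClique3 E S)
    (hcard : S.card + 2 = Fintype.card α) {v : α} (hv : v ∉ S) :
    ∃ w, ∀ t ∈ nonEdges E, v ∉ t → w ∈ t := by
  have : (Sᶜ.erase v).card = 1 := by
    rw [card_erase_of_mem (mem_compl.mpr hv), card_compl]
    omega
  obtain ⟨w, hw⟩ := card_eq_one.mp this
  refine ⟨w, fun t ht hvt => ?_⟩
  obtain ⟨x, hxt, hxS⟩ := not_subset.mp fun hsub => ht.2 (hS t hsub ht.1)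
  have hx : x ∈ Sᶜ.erase v := mem_erase.mpr ⟨fun h => hvt (h ▸ hxt), mem_compl.mpr hxS⟩
  rw [hw, mem_singleton] at hx
  exact hx ▸ hxt

theorem exists_mem_nonEdges_notMem (hω : ∀ S, IsClique3 E S → S.card + 2 ≤ Fintype.card α)
    (s : α) : ∃ t ∈ nonEdges E, s ∉ t := by
  have hnot : ¬ IsClique3 E {s}ᶜ := fun h => by
    have := hω _ h
    rw [card_compl, card_singleton] at this
    omega
  simp only [IsClique3, not_forall] at hnot
  obtain ⟨t, hts, ht3, htE⟩ := hnot
  exact ⟨t, ⟨ht3, htE⟩, fun hs => by simpa using hts hs⟩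

end Hypergraph

theorem szemeredi_petruska_m_two_general {α : Type*} [Fintype α] [DecidableEq α]
    (n k : ℕ) (hnm : 2 < n)
    (E : Finset (Finset α))
    (horder : Fintype.card α = n)
    (hk : k = n - 2)
    (homega_le : ∀ S : Finset α, IsClique3 E S → S.card ≤ k)
    (hempty : ∀ v : α, ∃ S : Finset α, IsClique3 E S ∧ S.card = k ∧ v ∉ S) :
    n ≤ 6 := by
  subst horder hk
  have hpartner (v : α) : ∃ w, ∀ t ∈ nonEdges E, v ∉ t → w ∈ t := by
    obtain ⟨S, hS, hSk, hv⟩ := hempty v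
    exact hS.exists_mem_of_notMem (by omega) hv
  choose p hp using hpartner
  exact card_le_six_of_mapsTo_compl (fun t ht => ht.1) (fun t ht v hv => hp v t ht hv)
    (exists_mem_nonEdges_notMem fun S hS => by have := homega_le S hS; omega)

/-- The Szemerédi–Petruska conjecture for m = 2. -/
theorem szemeredi_petruska_m_two {α : Type*} [Fintype α] [DecidableEq α]
    (n k : ℕ) (hnm : 2 < n)
    (E : Finset (Finset α)) (hE : ∀ e ∈ E, e.card = 3)
    (horder : Fintype.card α = n)
    (hk : k = n - 2) (hk3 : 3 ≤ k)
    (homega_le : ∀ S : Finset α, IsClique3 E S → S.card ≤ k)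
    (homega_ex : ∃ S : Finset α, IsClique3 E S ∧ S.card = k)
    (hempty : ∀ v : α, ∃ S : Finset α, IsClique3 E S ∧ S.card = k ∧ v ∉ S) :
    n ≤ 6 :=
  szemeredi_petruska_m_two_general n k hnm E horder hk homega_le hempty
end

section
/- Let H be a 3-uniform hypergraph with clique number ω(H) = k, and let N_1, …, N_ℓ (ℓ ≥ 3) be maximum cliques of H such that ⋂_{i=1}^ℓ N_i = ∅ while ⋂_{j ≠ i} N_j ≠ ∅ for every i ∈ {1,…,ℓ}. Then for each i ∈ {1,…,ℓ} there exists a 2-element set p_i ⊆ N_i (a private pair of N_i) such that p_i ⊆ N_j if and only if j = i. -/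
open Finset

section

variable {α : Type*} [DecidableEq α] {E : Finset (Finset α)} {S : Finset α} {v : α}

theorem isClique3_insert (hS : IsClique3 E S)
    (hv : ∀ p ⊆ S, p.card = 2 → insert v p ∈ E) : IsClique3 E (insert v S) := by
  intro t ht htc
  by_cases hvt : v ∈ t
  · have hsub : t.erase v ⊆ S :=
      (erase_subset_erase v ht).trans (erase_insert_subset v S)
    have hcard : (t.erase v).card = 2 := by rw [card_erase_of_mem hvt, htc]
    simpa only [insert_erase hvt] using hv _ hsub hcard
  · exact hS t ((subset_insert_iff_of_notMem hvt).mp ht) htc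

theorem exists_pair_insert_notMem_of_isClique3 {k : ℕ}
    (hmax : ∀ T : Finset α, IsClique3 E T → T.card ≤ k) (hS : IsClique3 E S)
    (hSk : S.card = k) (hvS : v ∉ S) :
    ∃ p ⊆ S, p.card = 2 ∧ insert v p ∉ E := by
  by_contra! h
  have := hmax _ (isClique3_insert hS h)
  rw [card_insert_of_notMem hvS] at this
  omega

end

theorem private_pairs_exist_general {α : Type*} [Fintype α] [DecidableEq α]
    (E : Finset (Finset α))
    (k : ℕ)
    (homega_le : ∀ S : Finset α, IsClique3 E S → S.card ≤ k)
    (ℓ : ℕ)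
    (N : Fin ℓ → Finset α)
    (hN : ∀ i, IsClique3 E (N i) ∧ (N i).card = k)
    (hIntEmpty : (Finset.univ : Finset (Fin ℓ)).inf N = ∅)
    (hIntNonempty : ∀ i : Fin ℓ, (((Finset.univ : Finset (Fin ℓ)).erase i).inf N).Nonempty) :
    ∀ i : Fin ℓ, ∃ p : Finset α, p.card = 2 ∧ p ⊆ N i ∧ (∀ j : Fin ℓ, p ⊆ N j ↔ j = i) := by
  intro i
  obtain ⟨v, hv⟩ := hIntNonempty i
  have hv_other : ∀ j, j ≠ i → v ∈ N j := fun j hj =>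
    mem_inf.mp hv j (mem_erase.mpr ⟨hj, mem_univ j⟩)
  have hv_i : v ∉ N i := fun hvi => by
    have : v ∈ univ.inf N := mem_inf.mpr fun j _ =>
      if hj : j = i then hj ▸ hvi else hv_other j hj
    exact notMem_empty v (hIntEmpty ▸ this)
  obtain ⟨p, hp, hp2, hpE⟩ :=
    exists_pair_insert_notMem_of_isClique3 homega_le (hN i).1 (hN i).2 hv_i
  refine ⟨p, hp2, hp, fun j => ⟨fun hpj => ?_, fun hj => hj ▸ hp⟩⟩
  by_contra hji
  have hcard : (insert v p).card = 3 := by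
    rw [card_insert_of_notMem fun hvp => hv_i (hp hvp), hp2]
  exact hpE ((hN j).1 _ (insert_subset (hv_other j hji) hpj) hcard)

/-- Szemerédi–Petruska: each maximum clique `N i` of a critical family of maximum
cliques with empty total intersection contains a private pair. -/
theorem private_pairs_exist {α : Type*} [Fintype α] [DecidableEq α]
    (E : Finset (Finset α)) (hE : ∀ e ∈ E, e.card = 3)
    (k : ℕ)
    (homega_le : ∀ S : Finset α, IsClique3 E S → S.card ≤ k)
    (homega_ex : ∃ S : Finset α, IsClique3 E S ∧ S.card = k)
    (ℓ : ℕ) (hℓ : 3 ≤ ℓ)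
    (N : Fin ℓ → Finset α)
    (hN : ∀ i, IsClique3 E (N i) ∧ (N i).card = k)
    (hIntEmpty : (Finset.univ : Finset (Fin ℓ)).inf N = ∅)
    (hIntNonempty : ∀ i : Fin ℓ, (((Finset.univ : Finset (Fin ℓ)).erase i).inf N).Nonempty) :
    ∀ i : Fin ℓ, ∃ p : Finset α, p.card = 2 ∧ p ⊆ N i ∧ (∀ j : Fin ℓ, p ⊆ N j ↔ j = i) :=
  private_pairs_exist_general E k homega_le ℓ N hN hIntEmpty hIntNonempty
end

section
/- In an intersecting (2,m)-system covering V, |V| = |V_0(G)| + |Z(G)| ≤ |V_0(G)| + w(G). -/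
open Finset

/-- The minimum cardinality of a set `S ⊆ A` meeting every member `q i`, `i ∈ s`,
of a set system (a transversal number). -/
noncomputable def transversalNum {α ι : Type*} [DecidableEq α]
    (A : Finset α) (s : Finset ι) (q : ι → Finset α) : ℕ :=
  sInf {n : ℕ | ∃ S : Finset α, S ⊆ A ∧ S.card = n ∧ ∀ i ∈ s, (S ∩ q i).Nonempty}

/-!
For each edge `p j`, the set `M j ∩ V₀` avoids `p j` and meets every other edge (because
`p i ∩ M j ≠ ∅` for `i ≠ j`), so it is a truncated transversal of `G ∖ p j`. Hence
`τ(G ∖ p j) ≤ |M j ∩ V₀|`, i.e. `|M j \ V₀| ≤ m - τ(G ∖ p j) = w(p j)`. Since the `M j` cover `V`,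
the vertices of `Z(G) = V \ V₀` are covered by the sets `M j \ V₀`, so `|Z(G)| ≤ w(G)`.
-/

theorem transversalNum_le_card {α ι : Type*} [DecidableEq α] {A S : Finset α} {s : Finset ι}
    {q : ι → Finset α} (hSA : S ⊆ A) (hS : ∀ i ∈ s, (S ∩ q i).Nonempty) :
    transversalNum A s q ≤ S.card :=
  Nat.sInf_le ⟨S, hSA, rfl, hS⟩

theorem card_compl_le_sum_card_sdiff {α ι : Type*} [Fintype α] [DecidableEq α] [Fintype ι]
    {M : ι → Finset α} (hcover : univ.biUnion M = univ) (B : Finset α) :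
    (univ \ B).card ≤ ∑ j, (M j \ B).card := by
  have hsub : univ \ B ⊆ univ.biUnion fun j => M j \ B := by
    intro x hx
    obtain ⟨j, -, hxM⟩ := mem_biUnion.1 (hcover ▸ mem_univ x : x ∈ univ.biUnion M)
    exact mem_biUnion.2 ⟨j, mem_univ j, mem_sdiff.2 ⟨hxM, (mem_sdiff.1 hx).2⟩⟩
  exact (card_le_card hsub).trans card_biUnion_le

section SetSystem

variable {α ι : Type*} [Fintype α] [DecidableEq α] [Fintype ι] [DecidableEq ι]
  {p M : ι → Finset α} {j : ι}

theorem transversalNum_truncation_le_card_inter_biUnion (hdisj : Disjoint (p j) (M j))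
    (hmeet : ∀ i ≠ j, (p i ∩ M j).Nonempty) :
    transversalNum (univ \ p j) (univ.erase j) (fun h => p h \ p j)
      ≤ (M j ∩ univ.biUnion p).card := by
  refine transversalNum_le_card (fun x hx => ?_) fun i hi => ?_
  · exact mem_sdiff.2 ⟨mem_univ x, disjoint_right.1 hdisj (mem_inter.1 hx).1⟩
  · obtain ⟨x, hx⟩ := hmeet i (ne_of_mem_erase hi)
    obtain ⟨hxp, hxM⟩ := mem_inter.1 hx
    exact ⟨x, mem_inter.2 ⟨mem_inter.2 ⟨hxM, mem_biUnion.2 ⟨i, mem_univ i, hxp⟩⟩,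
      mem_sdiff.2 ⟨hxp, disjoint_right.1 hdisj hxM⟩⟩⟩

theorem card_sdiff_biUnion_le_weight {m : ℕ} (hM : (M j).card = m) (hdisj : Disjoint (p j) (M j))
    (hmeet : ∀ i ≠ j, (p i ∩ M j).Nonempty) :
    ((M j \ univ.biUnion p).card : ℤ)
      ≤ m - transversalNum (univ \ p j) (univ.erase j) (fun h => p h \ p j) := by
  have hsplit := card_sdiff_add_card_inter (M j) (univ.biUnion p)
  have hτ := transversalNum_truncation_le_card_inter_biUnion hdisj hmeet
  omega

end SetSystem

theorem order_le_V0_add_weight_general {α : Type*} [Fintype α] [DecidableEq α]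
    (m ℓ : ℕ)
    (p M : Fin ℓ → Finset α)
    (hM : ∀ i, (M i).card = m)
    (hpM : ∀ i j, p i ∩ M j = ∅ ↔ i = j)
    (hcover : Finset.univ.biUnion M = (Finset.univ : Finset α))
    :
    Fintype.card α
      = (Finset.univ.biUnion p).card + ((Finset.univ : Finset α) \ Finset.univ.biUnion p).card ∧
    (Fintype.card α : ℤ)
      ≤ ((Finset.univ.biUnion p).card : ℤ)
        + ∑ j : Fin ℓ, ((m : ℤ)
            - (transversalNum (Finset.univ \ p j) (Finset.univ.erase j) (fun h => p h \ p j) : ℤ)) := by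
  have hsplit : Fintype.card α = (univ.biUnion p).card + (univ \ univ.biUnion p).card := by
    rw [← card_univ, add_comm, card_sdiff_add_card_eq_card (subset_univ _)]
  refine ⟨hsplit, ?_⟩
  have hweight : ∀ j, ((M j \ univ.biUnion p).card : ℤ)
      ≤ m - transversalNum (univ \ p j) (univ.erase j) (fun h => p h \ p j) := fun j =>
    card_sdiff_biUnion_le_weight (hM j) (disjoint_iff_inter_eq_empty.2 ((hpM j j).2 rfl))
      fun i hi => nonempty_iff_ne_empty.2 fun h => hi ((hpM i j).1 h)
  have hZ : ((univ \ univ.biUnion p).card : ℤ) ≤ ∑ j, ((M j \ univ.biUnion p).card : ℤ) := by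
    exact_mod_cast card_compl_le_sum_card_sdiff hcover _
  rw [hsplit]
  push_cast
  linarith [sum_le_sum fun j (_ : j ∈ univ) => hweight j]

/-- order_le_V0_add_weight -/
theorem order_le_V0_add_weight {α : Type*} [Fintype α] [DecidableEq α]
    (m ℓ : ℕ) (hℓ : 3 ≤ ℓ)
    (p M : Fin ℓ → Finset α)
    (hp : ∀ i, (p i).card = 2)
    (hM : ∀ i, (M i).card = m)
    (hpM : ∀ i j, p i ∩ M j = ∅ ↔ i = j)
    (hcover : Finset.univ.biUnion M = (Finset.univ : Finset α))
    :
    Fintype.card α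
      = (Finset.univ.biUnion p).card + ((Finset.univ : Finset α) \ Finset.univ.biUnion p).card ∧
    (Fintype.card α : ℤ)
      ≤ ((Finset.univ.biUnion p).card : ℤ)
        + ∑ j : Fin ℓ, ((m : ℤ)
            - (transversalNum (Finset.univ \ p j) (Finset.univ.erase j) (fun h => p h \ p j) : ℤ)) :=
  order_le_V0_add_weight_general m ℓ p M hM hpM hcover
end

section
/- In an intersecting (2,m)-system covering V with m ≥ 2, if τ(G) = 2 then |V| ≤ (m+2 choose 2). -/
open Finset

/-!
Let `{x, y}` be a transversal of the edges `p i`. The edges through `x` form a star with leaves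
`a i`, the remaining ones a star at `y` with leaves `b k`; put `V₀ = {x, y} ∪ {a i} ∪ {b k}`.
Since the `M j` cover `V` and have `m` points each, `|V| ≤ |V₀| + ∑ j (m - |M j ∩ V₀|)`.
Each `M j` of the star at `x` avoids `x ∈ p j` but meets every other edge of that star, so it
contains all leaves `a i`, `i ≠ j`, and symmetrically at `y`. It also meets every edge of the
other star, which yields further points of `V₀` depending on whether `xy` is an edge and on how
the two leaf sets overlap. In each case the bound is a sum of two quadratics in the star sizes
whose maximum is at most `(m + 2).choose 2`.
-/

section

variable {α ι : Type*}

theorem le_choose_two_iff {n m : ℕ} : n ≤ (m + 2).choose 2 ↔ 2 * n ≤ (m + 1) * (m + 2) := by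
  rw [Nat.choose_two_right, Nat.le_div_iff_mul_le two_pos, mul_comm n, mul_comm (m + 1)]
  rfl

theorem le_choose_two_of_le_one_add_two_mul {n s t m : ℕ} (hm : 2 ≤ m)
    (h : n + s * s + t * t ≤ 1 + 2 * s + (s + t) * m) : n ≤ (m + 2).choose 2 := by
  rw [le_choose_two_iff]
  zify at *
  nlinarith [sq_nonneg ((2 : ℤ) * s - m - 2), sq_nonneg ((2 : ℤ) * t - m)]

theorem le_choose_two_of_le_two_add_add {n s t m : ℕ} (hm : 2 ≤ m)
    (h : n + s * s + t * t ≤ 2 + s + t + (s + t) * m) : n ≤ (m + 2).choose 2 := by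
  rw [le_choose_two_iff]
  rcases hm.eq_or_lt with rfl | hm <;> zify at *
  · nlinarith [Int.le_self_sq ((s : ℤ) - 1), Int.le_self_sq ((t : ℤ) - 1)]
  · nlinarith [sq_nonneg ((2 : ℤ) * s - m - 1), sq_nonneg ((2 : ℤ) * t - m - 1)]

theorem le_choose_two_of_le_two_add_two_mul {n s t m : ℕ} (hm : 2 ≤ m)
    (h : n + s * s + t * t + t ≤ 2 + 2 * s + (s + t) * m) : n ≤ (m + 2).choose 2 := by
  rw [le_choose_two_iff]
  rcases hm.eq_or_lt with rfl | hm <;> zify at *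
  · nlinarith [Int.le_self_sq (t : ℤ), sq_nonneg ((s : ℤ) - 2)]
  · nlinarith [sq_nonneg ((2 : ℤ) * s - m - 2), sq_nonneg ((2 : ℤ) * t - m + 1)]

theorem card_le_sum_card_of_nonempty {s t : Finset ι} (hts : t ⊆ s) {D : ι → Finset α}
    (hD : ∀ j ∈ t, (D j).Nonempty) : #t ≤ ∑ j ∈ s, #(D j) :=
  calc #t = ∑ _j ∈ t, 1 := card_eq_sum_ones t
    _ ≤ ∑ j ∈ t, #(D j) := sum_le_sum fun j hj => card_pos.2 (hD j hj)
    _ ≤ ∑ j ∈ s, #(D j) := sum_le_sum_of_subset hts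

variable [DecidableEq α]

theorem card_filter_mem_of_subset_image {s : Finset ι} {f : ι → α} (hf : Set.InjOn f s)
    {t : Finset α} (ht : t ⊆ s.image f) : #(s.filter (f · ∈ t)) = #t := by
  rw [← card_image_of_injOn (hf.mono (filter_subset _ s)), ← filter_image (p := (· ∈ t)),
    filter_mem_eq_inter, inter_eq_right.2 ht]

theorem exists_transversal_of_transversalNum_ne_zero {A : Finset α} {s : Finset ι}
    {q : ι → Finset α} (h : transversalNum A s q ≠ 0) :
    ∃ S ⊆ A, #S = transversalNum A s q ∧ ∀ i ∈ s, (S ∩ q i).Nonempty := by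
  set T := {n : ℕ | ∃ S : Finset α, S ⊆ A ∧ #S = n ∧ ∀ i ∈ s, (S ∩ q i).Nonempty}
  have hT : T.Nonempty :=
    Set.nonempty_iff_ne_empty.2 fun he => h ((congrArg sInf he).trans Nat.sInf_empty)
  exact Nat.sInf_mem hT

theorem card_add_sum_card_inter_le [Fintype α] {M : ι → Finset α} {m : ℕ} {I : Finset ι}
    (hM : ∀ i ∈ I, #(M i) = m) (hcover : I.biUnion M = univ) (V₀ : Finset α) :
    Fintype.card α + ∑ j ∈ I, #(M j ∩ V₀) ≤ #V₀ + #I * m := by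
  have hZ : univ \ V₀ ⊆ I.biUnion fun j => M j \ V₀ := by
    intro v hv
    obtain ⟨j, hj, hvj⟩ := mem_biUnion.1 (hcover ▸ mem_univ v)
    exact mem_biUnion.2 ⟨j, hj, mem_sdiff.2 ⟨hvj, (mem_sdiff.1 hv).2⟩⟩
  calc Fintype.card α + ∑ j ∈ I, #(M j ∩ V₀)
      = #V₀ + #(univ \ V₀) + ∑ j ∈ I, #(M j ∩ V₀) := by
        rw [add_comm #V₀, card_sdiff_add_card_eq_card (subset_univ _), card_univ]
    _ ≤ #V₀ + ∑ j ∈ I, #(M j \ V₀) + ∑ j ∈ I, #(M j ∩ V₀) := by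
        gcongr; exact (card_le_card hZ).trans card_biUnion_le
    _ = #V₀ + #I * m := by
        rw [add_assoc, ← sum_add_distrib, sum_congr rfl fun j hj => by
          rw [card_sdiff_add_card_inter, hM j hj], sum_const, smul_eq_mul]

def IsIntersectingSystem (p M : ι → Finset α) : Prop :=
  ∀ i j, p i ∩ M j = ∅ ↔ i = j

def IsStar (p : ι → Finset α) (c : α) (A : Finset ι) (f : ι → α) : Prop :=
  ∀ i ∈ A, p i = {c, f i}

variable {p M : ι → Finset α}

namespace IsIntersectingSystem

theorem notMem_of_mem (hS : IsIntersectingSystem p M) {j : ι} {v : α} (hv : v ∈ p j) :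
    v ∉ M j :=
  disjoint_left.1 (disjoint_iff_inter_eq_empty.2 ((hS j j).2 rfl)) hv

theorem mem_of_eq_pair (hS : IsIntersectingSystem p M) {i j : ι} (hij : i ≠ j) {u v : α}
    (hi : p i = {u, v}) (hu : u ∉ M j) : v ∈ M j := by
  obtain ⟨w, hw⟩ := nonempty_iff_ne_empty.2 (mt (hS i j).1 hij)
  rw [mem_inter, hi, mem_insert, mem_singleton] at hw
  rcases hw with ⟨rfl | rfl, hw⟩
  exacts [absurd hw hu, hw]

theorem injective (hS : IsIntersectingSystem p M) : Function.Injective p :=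
  fun i j h => (hS i j).1 (h ▸ (hS j j).2 rfl)

end IsIntersectingSystem

theorem exists_isStar (hp : ∀ i, #(p i) = 2) {c : α} {A : Finset ι}
    (hA : ∀ i ∈ A, c ∈ p i) : ∃ f, IsStar p c A f := by
  have : ∀ i, ∃ v, i ∈ A → p i = {c, v} := by
    intro i
    by_cases hi : i ∈ A
    · obtain ⟨u, w, -, he⟩ := card_eq_two.1 (hp i)
      have hc := hA i hi
      rw [he, mem_insert, mem_singleton] at hc
      rcases hc with rfl | rfl
      exacts [⟨w, fun _ => he⟩, ⟨u, fun _ => he.trans (pair_comm _ _)⟩]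
    · exact ⟨c, fun h => absurd h hi⟩
  choose f hf using this
  exact ⟨f, hf⟩

namespace IsStar

variable {c : α} {A : Finset ι} {f : ι → α}

theorem mono (h : IsStar p c A f) {B : Finset ι} (hBA : B ⊆ A) : IsStar p c B f :=
  fun i hi => h i (hBA hi)

theorem center_mem (h : IsStar p c A f) {i : ι} (hi : i ∈ A) : c ∈ p i := by
  rw [h i hi]; exact mem_insert_self c _

theorem leaf_mem (h : IsStar p c A f) {i : ι} (hi : i ∈ A) : f i ∈ p i := by
  rw [h i hi]; exact mem_insert_of_mem (mem_singleton_self _)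

theorem injOn (hS : IsIntersectingSystem p M) (h : IsStar p c A f) : Set.InjOn f A :=
  fun i hi j hj hij => hS.injective <| by rw [h i hi, h j hj, hij]

theorem card_image (hS : IsIntersectingSystem p M) (h : IsStar p c A f) : #(A.image f) = #A :=
  card_image_of_injOn (h.injOn hS)

theorem image_subset (hS : IsIntersectingSystem p M) (h : IsStar p c A f) {j : ι} (hj : j ∉ A)
    (hc : c ∉ M j) : A.image f ⊆ M j := by
  intro v hv
  obtain ⟨i, hi, rfl⟩ := mem_image.1 hv
  exact hS.mem_of_eq_pair (ne_of_mem_of_not_mem hi hj) (h i hi) hc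

/-- `M j` contains every leaf except `f j`. -/
theorem card_mul_add_sum_card_sdiff_le [DecidableEq ι] (hS : IsIntersectingSystem p M)
    (h : IsStar p c A f) {V₀ : Finset α} (hV₀ : A.image f ⊆ V₀) :
    #A * #A + ∑ j ∈ A, #((M j ∩ V₀) \ A.image f) ≤ ∑ j ∈ A, #(M j ∩ V₀) + #A := by
  have hj_bound : ∀ j ∈ A, #A + #((M j ∩ V₀) \ A.image f) ≤ #(M j ∩ V₀) + 1 := by
    intro j hj
    have hA' := h.mono (erase_subset j A)
    have hleaves : (A.erase j).image f ⊆ M j ∩ V₀ ∩ A.image f :=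
      subset_inter (subset_inter
        (hA'.image_subset hS (notMem_erase j A) (hS.notMem_of_mem (h.center_mem hj)))
        ((image_subset_image (erase_subset j A)).trans hV₀))
        (image_subset_image (erase_subset j A))
    have hcard := card_le_card hleaves
    rw [hA'.card_image hS, card_erase_of_mem hj] at hcard
    have := card_inter_add_card_sdiff (M j ∩ V₀) (A.image f)
    have := card_pos.2 ⟨j, hj⟩
    omega
  calc #A * #A + ∑ j ∈ A, #((M j ∩ V₀) \ A.image f)
      = ∑ j ∈ A, (#A + #((M j ∩ V₀) \ A.image f)) := by
        rw [sum_add_distrib, sum_const, smul_eq_mul]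
    _ ≤ ∑ j ∈ A, (#(M j ∩ V₀) + 1) := sum_le_sum hj_bound
    _ = ∑ j ∈ A, #(M j ∩ V₀) + #A := by rw [sum_add_distrib, card_eq_sum_ones]

end IsStar

namespace IsIntersectingSystem

variable {x y : α} {A B : Finset ι} {a b : ι → α}

theorem nonempty_inter_sdiff_image (hS : IsIntersectingSystem p M) (hA : IsStar p x A a)
    (hB : IsStar p y B b) (hAB : Disjoint A B) (hy : y ∉ A.image a) {V₀ : Finset α}
    (hyV₀ : y ∈ V₀) (hβV₀ : B.image b ⊆ V₀) {j : ι} (hj : j ∈ A)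
    (h : a j ∈ B.image b ∨ ¬ B.image b ⊆ A.image a) :
    ((M j ∩ V₀) \ A.image a).Nonempty := by
  by_cases hyM : y ∈ M j
  · exact ⟨y, mem_sdiff.2 ⟨mem_inter.2 ⟨hyM, hyV₀⟩, hy⟩⟩
  · have hβM := hB.image_subset hS (disjoint_left.1 hAB hj) hyM
    have hβα : ¬ B.image b ⊆ A.image a :=
      h.resolve_left fun ha => hS.notMem_of_mem (hA.leaf_mem hj) (hβM ha)
    obtain ⟨e, he, heα⟩ := not_subset.1 hβα
    exact ⟨e, mem_sdiff.2 ⟨mem_inter.2 ⟨hβM he, hβV₀ he⟩, heα⟩⟩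

variable [Fintype α] [DecidableEq ι] {m : ℕ}

theorem card_add_sum_card_sdiff_le (hS : IsIntersectingSystem p M) (hM : ∀ i, #(M i) = m)
    (hcover : (A ∪ B).biUnion M = univ) (hA : IsStar p x A a) (hB : IsStar p y B b)
    (hAB : Disjoint A B) {V₀ : Finset α} (hαV₀ : A.image a ⊆ V₀)
    (hβV₀ : B.image b ⊆ V₀) :
    Fintype.card α + #A * #A + #B * #B + ∑ j ∈ A, #((M j ∩ V₀) \ A.image a) +
      ∑ k ∈ B, #((M k ∩ V₀) \ B.image b) ≤ #V₀ + (#A + #B) * (m + 1) := by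
  have hcount := card_add_sum_card_inter_le (fun i _ => hM i) hcover V₀
  rw [sum_union hAB, card_union_of_disjoint hAB] at hcount
  have hsideA := hA.card_mul_add_sum_card_sdiff_le hS hαV₀
  have hsideB := hB.card_mul_add_sum_card_sdiff_le hS hβV₀
  linarith

theorem card_le_choose_two_of_mem_image (hS : IsIntersectingSystem p M)
    (hM : ∀ i, #(M i) = m) (hcover : (A ∪ B).biUnion M = univ) (hm : 2 ≤ m)
    (hA : IsStar p x A a) (hB : IsStar p y B b) (hAB : Disjoint A B) (hx : x ∉ B.image b)
    (hy : y ∈ A.image a) : Fintype.card α ≤ (m + 2).choose 2 := by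
  obtain ⟨j₀, hj₀, rfl⟩ := mem_image.1 hy
  have hj₀B : j₀ ∉ B := disjoint_left.1 hAB hj₀
  set V₀ := insert x (A.image a ∪ B.image b)
  have hαV₀ : A.image a ⊆ V₀ := subset_union_left.trans (subset_insert _ _)
  have hβV₀ : B.image b ⊆ V₀ := subset_union_right.trans (subset_insert _ _)
  have hV₀ : #V₀ ≤ 1 + #A + #(B.image b \ A.image a) := by
    refine (card_insert_le _ _).trans ?_
    rw [union_comm, ← card_sdiff_add_card, hA.card_image hS]
    omega
  have hβM : B.image b ⊆ M j₀ :=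
    hB.image_subset hS hj₀B (hS.notMem_of_mem (hA.leaf_mem hj₀))
  have hextraA : #(B.image b \ A.image a) ≤ ∑ j ∈ A, #((M j ∩ V₀) \ A.image a) :=
    calc #(B.image b \ A.image a) ≤ #((M j₀ ∩ V₀) \ A.image a) :=
          card_le_card (sdiff_subset_sdiff (subset_inter hβM hβV₀) subset_rfl)
      _ ≤ ∑ j ∈ A, #((M j ∩ V₀) \ A.image a) :=
          single_le_sum (f := fun j => #((M j ∩ V₀) \ A.image a))
            (fun _ _ => Nat.zero_le _) hj₀
  -- `M k` meets `p j₀ = {x, a j₀}` but avoids `a j₀ ∈ p k`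
  have hxM : ∀ k ∈ B, x ∈ M k := fun k hk =>
    hS.mem_of_eq_pair (ne_of_mem_of_not_mem hk hj₀B).symm ((hA j₀ hj₀).trans (pair_comm _ _))
      (hS.notMem_of_mem (hB.center_mem hk))
  have hextraB : #B ≤ ∑ k ∈ B, #((M k ∩ V₀) \ B.image b) :=
    card_le_sum_card_of_nonempty subset_rfl fun k hk =>
      ⟨x, mem_sdiff.2 ⟨mem_inter.2 ⟨hxM k hk, mem_insert_self _ _⟩, hx⟩⟩
  have := hS.card_add_sum_card_sdiff_le hM hcover hA hB hAB hαV₀ hβV₀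
  exact le_choose_two_of_le_one_add_two_mul (s := #A) (t := #B) hm (by linarith)

theorem card_le_choose_two_of_image_subset (hS : IsIntersectingSystem p M)
    (hM : ∀ i, #(M i) = m) (hcover : (A ∪ B).biUnion M = univ) (hm : 2 ≤ m)
    (hA : IsStar p x A a) (hB : IsStar p y B b) (hAB : Disjoint A B) (hx : x ∉ B.image b)
    (hy : y ∉ A.image a) (hβα : B.image b ⊆ A.image a) :
    Fintype.card α ≤ (m + 2).choose 2 := by
  set V₀ := insert x (insert y (A.image a))
  have hxV₀ : x ∈ V₀ := mem_insert_self _ _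
  have hyV₀ : y ∈ V₀ := mem_insert_of_mem (mem_insert_self _ _)
  have hαV₀ : A.image a ⊆ V₀ := (subset_insert _ _).trans (subset_insert _ _)
  have hV₀ : #V₀ ≤ 2 + #A := by
    refine (card_insert_le _ _).trans ?_
    have := card_insert_le y (A.image a)
    rw [hA.card_image hS] at this
    omega
  have hextraA : #B ≤ ∑ j ∈ A, #((M j ∩ V₀) \ A.image a) := by
    rw [← hB.card_image hS, ← card_filter_mem_of_subset_image (hA.injOn hS) hβα]
    exact card_le_sum_card_of_nonempty (filter_subset _ A) fun j hj =>
      hS.nonempty_inter_sdiff_image hA hB hAB hy hyV₀ (hβα.trans hαV₀) (mem_filter.1 hj).1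
        (Or.inl (mem_filter.1 hj).2)
  have hextraB : #B ≤ ∑ k ∈ B, #((M k ∩ V₀) \ B.image b) :=
    card_le_sum_card_of_nonempty subset_rfl fun k hk =>
      hS.nonempty_inter_sdiff_image hB hA hAB.symm hx hxV₀ hαV₀ hk
        (Or.inl (hβα (mem_image_of_mem b hk)))
  have := hS.card_add_sum_card_sdiff_le hM hcover hA hB hAB hαV₀ (hβα.trans hαV₀)
  exact le_choose_two_of_le_two_add_two_mul (s := #A) (t := #B) hm (by linarith)

theorem card_le_choose_two_of_not_image_subset (hS : IsIntersectingSystem p M)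
    (hM : ∀ i, #(M i) = m) (hcover : (A ∪ B).biUnion M = univ) (hm : 2 ≤ m)
    (hA : IsStar p x A a) (hB : IsStar p y B b) (hAB : Disjoint A B) (hx : x ∉ B.image b)
    (hy : y ∉ A.image a) (hβα : ¬ B.image b ⊆ A.image a)
    (hαβ : ¬ A.image a ⊆ B.image b) :
    Fintype.card α ≤ (m + 2).choose 2 := by
  set V₀ := insert x (insert y (A.image a ∪ B.image b))
  have hxV₀ : x ∈ V₀ := mem_insert_self _ _
  have hyV₀ : y ∈ V₀ := mem_insert_of_mem (mem_insert_self _ _)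
  have hαV₀ : A.image a ⊆ V₀ :=
    subset_union_left.trans ((subset_insert _ _).trans (subset_insert _ _))
  have hβV₀ : B.image b ⊆ V₀ :=
    subset_union_right.trans ((subset_insert _ _).trans (subset_insert _ _))
  have hV₀ : #V₀ ≤ 2 + #A + #B := by
    refine (card_insert_le _ _).trans ?_
    have hins := card_insert_le y (A.image a ∪ B.image b)
    have hunion := card_union_le (A.image a) (B.image b)
    rw [hA.card_image hS, hB.card_image hS] at hunion
    omega
  have hextraA : #A ≤ ∑ j ∈ A, #((M j ∩ V₀) \ A.image a) :=
    card_le_sum_card_of_nonempty subset_rfl fun j hj =>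
      hS.nonempty_inter_sdiff_image hA hB hAB hy hyV₀ hβV₀ hj (Or.inr hβα)
  have hextraB : #B ≤ ∑ k ∈ B, #((M k ∩ V₀) \ B.image b) :=
    card_le_sum_card_of_nonempty subset_rfl fun k hk =>
      hS.nonempty_inter_sdiff_image hB hA hAB.symm hx hxV₀ hαV₀ hk (Or.inr hαβ)
  have := hS.card_add_sum_card_sdiff_le hM hcover hA hB hAB hαV₀ hβV₀
  exact le_choose_two_of_le_two_add_add (s := #A) (t := #B) hm (by linarith)

theorem card_le_choose_two_of_isStar (hS : IsIntersectingSystem p M)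
    (hM : ∀ i, #(M i) = m) (hcover : (A ∪ B).biUnion M = univ) (hm : 2 ≤ m)
    (hA : IsStar p x A a) (hB : IsStar p y B b) (hAB : Disjoint A B) (hx : x ∉ B.image b) :
    Fintype.card α ≤ (m + 2).choose 2 := by
  by_cases hy : y ∈ A.image a
  · exact hS.card_le_choose_two_of_mem_image hM hcover hm hA hB hAB hx hy
  by_cases hβα : B.image b ⊆ A.image a
  · exact hS.card_le_choose_two_of_image_subset hM hcover hm hA hB hAB hx hy hβα
  by_cases hαβ : A.image a ⊆ B.image b
  · exact hS.card_le_choose_two_of_image_subset hM (union_comm A B ▸ hcover) hm hB hA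
      hAB.symm hy hx hαβ
  exact hS.card_le_choose_two_of_not_image_subset hM hcover hm hA hB hAB hx hy hβα hαβ

end IsIntersectingSystem

end

theorem tau_two_case_general {α : Type*} [Fintype α] [DecidableEq α]
    (m ℓ : ℕ)
    (p M : Fin ℓ → Finset α)
    (hp : ∀ i, (p i).card = 2)
    (hM : ∀ i, (M i).card = m)
    (hpM : ∀ i j, p i ∩ M j = ∅ ↔ i = j)
    (hcover : Finset.univ.biUnion M = (Finset.univ : Finset α))
    (hm : 2 ≤ m)
    (htau : transversalNum (Finset.univ : Finset α) Finset.univ p = 2) :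
    Fintype.card α ≤ (m + 2).choose 2 := by
  obtain ⟨S, -, hS, hmeet⟩ :=
    exists_transversal_of_transversalNum_ne_zero (htau ▸ two_ne_zero)
  obtain ⟨x, y, -, rfl⟩ := card_eq_two.1 (hS.trans htau)
  have hcov : ∀ i, x ∈ p i ∨ y ∈ p i := fun i => by
    obtain ⟨v, hv⟩ := hmeet i (mem_univ i)
    simp only [mem_inter, mem_insert, mem_singleton] at hv
    rcases hv with ⟨rfl | rfl, hv⟩
    exacts [Or.inl hv, Or.inr hv]
  obtain ⟨a, hA⟩ := exists_isStar hp (A := univ.filter (x ∈ p ·)) fun i hi =>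
    (mem_filter.1 hi).2
  obtain ⟨b, hB⟩ := exists_isStar hp (A := univ.filter (x ∉ p ·)) fun i hi =>
    (hcov i).resolve_left (mem_filter.1 hi).2
  refine IsIntersectingSystem.card_le_choose_two_of_isStar hpM hM
    (by rw [filter_union_filter_not_eq, hcover]) hm hA hB (disjoint_filter_filter_not _ _ _)
    fun hxb => ?_
  obtain ⟨k, hk, hbk⟩ := mem_image.1 hxb
  exact (mem_filter.1 hk).2 (hbk ▸ hB.leaf_mem hk)

/-- tau_two_case -/
theorem tau_two_case {α : Type*} [Fintype α] [DecidableEq α]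
    (m ℓ : ℕ) (hℓ : 3 ≤ ℓ)
    (p M : Fin ℓ → Finset α)
    (hp : ∀ i, (p i).card = 2)
    (hM : ∀ i, (M i).card = m)
    (hpM : ∀ i j, p i ∩ M j = ∅ ↔ i = j)
    (hcover : Finset.univ.biUnion M = (Finset.univ : Finset α))
    (hm : 2 ≤ m)
    (htau : transversalNum (Finset.univ : Finset α) Finset.univ p = 2) :
    Fintype.card α ≤ (m + 2).choose 2 :=
  tau_two_case_general m ℓ p M hp hM hpM hcover hm htau
end

section
/- In an intersecting (2,m)-system covering V (with ℓ ≥ 3), if p_ℓ is an isolated edge of G (that is, p_ℓ ∩ p_h = ∅ for every h ≠ ℓ) and w(p_ℓ) = 0, then τ(G) = m + 1, τ(G − p_j) = m for every j (so G is τ-critical), and w(p_j) = 0 for every j, hence w(G) = 0. -/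
/-!
Write `τ` for the transversal number of `G`, `t j` for that of `G - p j` and `u j` for the
truncated one of `G ∖ p j`. For every edge, `M j` is a truncated transversal, so `u j ≤ m`; a
truncated transversal is a transversal of `G - p j`, so `t j ≤ u j`; and adding a point of `p j`
to a transversal of `G - p j` gives one of `G`, so `τ ≤ t j + 1`. For the isolated edge `p jl`,
removing `p jl` from a minimum transversal of `G` loses at least one point and leaves a truncated
transversal, so `u jl + 1 ≤ τ`. With `u jl = m` the chain
`m = u jl ≤ τ - 1 ≤ t j ≤ u j ≤ m` collapses for every `j`.
-/

open Finset

section Transversal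

variable {α ι : Type*} [DecidableEq α] {A : Finset α} {s : Finset ι} {q : ι → Finset α}
  {S : Finset α}

def IsTransversal (A : Finset α) (s : Finset ι) (q : ι → Finset α) (S : Finset α) : Prop :=
  S ⊆ A ∧ ∀ i ∈ s, (S ∩ q i).Nonempty

theorem transversalNum_le_card_s15 (hS : IsTransversal A s q S) : transversalNum A s q ≤ S.card :=
  Nat.sInf_le ⟨S, hS.1, rfl, hS.2⟩

theorem exists_isTransversal_card_eq (hS : IsTransversal A s q S) :
    ∃ T, IsTransversal A s q T ∧ T.card = transversalNum A s q := by
  obtain ⟨T, hTA, hTcard, hTmeet⟩ := Nat.sInf_mem (s := {n : ℕ | ∃ S : Finset α, S ⊆ A ∧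
    S.card = n ∧ ∀ i ∈ s, (S ∩ q i).Nonempty}) ⟨S.card, S, hS.1, rfl, hS.2⟩
  exact ⟨T, ⟨hTA, hTmeet⟩, hTcard⟩

theorem transversalNum_le_transversalNum_sdiff (r : Finset α)
    (hS : IsTransversal (A \ r) s (fun i => q i \ r) S) :
    transversalNum A s q ≤ transversalNum (A \ r) s (fun i => q i \ r) := by
  obtain ⟨T, ⟨hTA, hTmeet⟩, hTcard⟩ := exists_isTransversal_card_eq hS
  refine hTcard ▸ transversalNum_le_card_s15 ⟨hTA.trans sdiff_subset, fun i hi => ?_⟩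
  exact (hTmeet i hi).mono (inter_subset_inter_left sdiff_subset)

theorem transversalNum_le_transversalNum_erase_add_one [DecidableEq ι] {j : ι}
    (hj : (A ∩ q j).Nonempty) (hS : IsTransversal A (s.erase j) q S) :
    transversalNum A s q ≤ transversalNum A (s.erase j) q + 1 := by
  obtain ⟨T, ⟨hTA, hTmeet⟩, hTcard⟩ := exists_isTransversal_card_eq hS
  obtain ⟨x, hx⟩ := hj
  obtain ⟨hxA, hxq⟩ := mem_inter.mp hx
  have hins : IsTransversal A s q (insert x T) := by
    refine ⟨insert_subset hxA hTA, fun i hi => ?_⟩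
    by_cases hij : i = j
    · exact ⟨x, mem_inter.mpr ⟨mem_insert_self x T, hij ▸ hxq⟩⟩
    · exact (hTmeet i (mem_erase.mpr ⟨hij, hi⟩)).mono
        (inter_subset_inter_right (subset_insert x T))
  calc transversalNum A s q ≤ (insert x T).card := transversalNum_le_card_s15 hins
    _ ≤ T.card + 1 := card_insert_le x T
    _ = transversalNum A (s.erase j) q + 1 := by rw [hTcard]

theorem transversalNum_sdiff_add_one_le [DecidableEq ι] {j : ι} (hj : j ∈ s)
    (hdisj : ∀ h ∈ s, h ≠ j → Disjoint (q h) (q j)) (hS : IsTransversal A s q S) :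
    transversalNum (A \ q j) (s.erase j) (fun h => q h \ q j) + 1 ≤ transversalNum A s q := by
  obtain ⟨T, ⟨hTA, hTmeet⟩, hTcard⟩ := exists_isTransversal_card_eq hS
  obtain ⟨y, hy⟩ := hTmeet j hj
  obtain ⟨hyT, hyq⟩ := mem_inter.mp hy
  have hrest : IsTransversal (A \ q j) (s.erase j) (fun h => q h \ q j) (T \ q j) := by
    refine ⟨sdiff_subset_sdiff hTA le_rfl, fun h hh => ?_⟩
    obtain ⟨hhj, hhs⟩ := mem_erase.mp hh
    obtain ⟨x, hx⟩ := hTmeet h hhs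
    obtain ⟨hxT, hxq⟩ := mem_inter.mp hx
    have hxj : x ∉ q j := disjoint_left.mp (hdisj h hhs hhj) hxq
    exact ⟨x, mem_inter.mpr ⟨mem_sdiff.mpr ⟨hxT, hxj⟩, mem_sdiff.mpr ⟨hxq, hxj⟩⟩⟩
  have hlt : (T \ q j).card < T.card :=
    card_lt_card ((ssubset_iff_of_subset sdiff_subset).mpr
      ⟨y, hyT, fun hy => (mem_sdiff.mp hy).2 hyq⟩)
  have := transversalNum_le_card_s15 hrest
  omega

end Transversal

theorem isTransversal_truncated_of_inter_eq_empty_iff {α ι : Type*} [Fintype α] [DecidableEq α]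
    [Fintype ι] [DecidableEq ι] {p M : ι → Finset α} (hpM : ∀ i j, p i ∩ M j = ∅ ↔ i = j)
    (j : ι) : IsTransversal (univ \ p j) (univ.erase j) (fun h => p h \ p j) (M j) := by
  have hMj : Disjoint (p j) (M j) := disjoint_iff_inter_eq_empty.mpr ((hpM j j).mpr rfl)
  refine ⟨fun x hx => mem_sdiff.mpr ⟨mem_univ x, disjoint_right.mp hMj hx⟩, fun h hh => ?_⟩
  obtain ⟨x, hx⟩ := nonempty_iff_ne_empty.mpr (mt (hpM h j).mp (mem_erase.mp hh).1)
  obtain ⟨hxp, hxM⟩ := mem_inter.mp hx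
  exact ⟨x, mem_inter.mpr ⟨hxM, mem_sdiff.mpr ⟨hxp, disjoint_right.mp hMj hxM⟩⟩⟩

theorem isolated_zero_weight_edge_general {α : Type*} [Fintype α] [DecidableEq α]
    (m ℓ : ℕ)
    (p M : Fin ℓ → Finset α)
    (hp : ∀ i, (p i).card = 2)
    (hM : ∀ i, (M i).card = m)
    (hpM : ∀ i j, p i ∩ M j = ∅ ↔ i = j)
    (jl : Fin ℓ)
    (hiso : ∀ h : Fin ℓ, h ≠ jl → p h ∩ p jl = ∅)
    (hw : (m : ℤ)
        - (transversalNum (Finset.univ \ p jl) (Finset.univ.erase jl) (fun h => p h \ p jl) : ℤ)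
      = 0) :
    transversalNum (Finset.univ : Finset α) Finset.univ p = m + 1 ∧
    (∀ j : Fin ℓ, transversalNum (Finset.univ : Finset α) (Finset.univ.erase j) p = m) ∧
    (∀ j : Fin ℓ, (m : ℤ)
        - (transversalNum (Finset.univ \ p j) (Finset.univ.erase j) (fun h => p h \ p j) : ℤ)
      = 0) ∧
    ∑ j : Fin ℓ, ((m : ℤ)
        - (transversalNum (Finset.univ \ p j) (Finset.univ.erase j) (fun h => p h \ p j) : ℤ))
      = 0 := by
  have hMtr := isTransversal_truncated_of_inter_eq_empty_iff hpM
  have hpj (j : Fin ℓ) : (univ ∩ p j).Nonempty := by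
    rw [univ_inter, ← card_pos, hp j]
    norm_num
  have huniv {s : Finset (Fin ℓ)} : IsTransversal univ s p univ :=
    ⟨Subset.rfl, fun i _ => hpj i⟩
  have hu_le (j : Fin ℓ) :
      transversalNum (univ \ p j) (univ.erase j) (fun h => p h \ p j) ≤ m :=
    hM j ▸ transversalNum_le_card_s15 (hMtr j)
  have ht_le_u (j : Fin ℓ) : transversalNum univ (univ.erase j) p ≤
      transversalNum (univ \ p j) (univ.erase j) (fun h => p h \ p j) :=
    transversalNum_le_transversalNum_sdiff (p j) (hMtr j)
  have hτ_le (j : Fin ℓ) :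
      transversalNum univ univ p ≤ transversalNum univ (univ.erase j) p + 1 :=
    transversalNum_le_transversalNum_erase_add_one (hpj j) huniv
  have hτ_ge : transversalNum (univ \ p jl) (univ.erase jl) (fun h => p h \ p jl) + 1 ≤
      transversalNum univ univ p :=
    transversalNum_sdiff_add_one_le (mem_univ jl)
      (fun h _ hh => disjoint_iff_inter_eq_empty.mpr (hiso h hh)) huniv
  have hu (j : Fin ℓ) :
      transversalNum (univ \ p j) (univ.erase j) (fun h => p h \ p j) = m := by
    have := hτ_le j; have := ht_le_u j; have := hu_le j
    omega
  refine ⟨?_, fun j => ?_, fun j => by rw [hu j, sub_self],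
    sum_eq_zero fun j _ => by rw [hu j, sub_self]⟩
  · have := hτ_le jl; have := ht_le_u jl
    omega
  · have := hτ_le j; have := ht_le_u j; have := hu j
    omega

/-- isolated_zero_weight_edge -/
theorem isolated_zero_weight_edge {α : Type*} [Fintype α] [DecidableEq α]
    (m ℓ : ℕ) (hℓ : 3 ≤ ℓ)
    (p M : Fin ℓ → Finset α)
    (hp : ∀ i, (p i).card = 2)
    (hM : ∀ i, (M i).card = m)
    (hpM : ∀ i j, p i ∩ M j = ∅ ↔ i = j)
    (hcover : Finset.univ.biUnion M = (Finset.univ : Finset α))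
    (jl : Fin ℓ) (hjl : (jl : ℕ) = ℓ - 1)
    (hiso : ∀ h : Fin ℓ, h ≠ jl → p h ∩ p jl = ∅)
    (hw : (m : ℤ)
        - (transversalNum (Finset.univ \ p jl) (Finset.univ.erase jl) (fun h => p h \ p jl) : ℤ)
      = 0) :
    transversalNum (Finset.univ : Finset α) Finset.univ p = m + 1 ∧
    (∀ j : Fin ℓ, transversalNum (Finset.univ : Finset α) (Finset.univ.erase j) p = m) ∧
    (∀ j : Fin ℓ, (m : ℤ)
        - (transversalNum (Finset.univ \ p j) (Finset.univ.erase j) (fun h => p h \ p j) : ℤ)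
      = 0) ∧
    ∑ j : Fin ℓ, ((m : ℤ)
        - (transversalNum (Finset.univ \ p j) (Finset.univ.erase j) (fun h => p h \ p j) : ℤ))
      = 0 :=
  isolated_zero_weight_edge_general m ℓ p M hp hM hpM jl hiso hw
end

section
/- There exists a 3-uniform hypergraph H of order n = 15 with clique number ω(H) = n − 4 = 11 such that the intersection of all maximum cliques of H is empty; hence the bound n ≤ (4+2 choose 2) = 15 in the Szemerédi–Petruska conjecture is attained for m = 4. -/
open Finset

section TriplesIn

variable {α ι : Type*} [DecidableEq α] [Fintype ι]

def triplesIn (C : ι → Finset α) : Finset (Finset α) :=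
  univ.biUnion fun i => (C i).powersetCard 3

@[simp]
theorem mem_triplesIn {C : ι → Finset α} {t : Finset α} :
    t ∈ triplesIn C ↔ ∃ i, t ⊆ C i ∧ t.card = 3 := by
  simp [triplesIn]

theorem card_of_mem_triplesIn {C : ι → Finset α} {t : Finset α} (ht : t ∈ triplesIn C) :
    t.card = 3 :=
  (mem_triplesIn.mp ht).choose_spec.2

theorem isClique3_triplesIn (C : ι → Finset α) (i : ι) : IsClique3 (triplesIn C) (C i) :=
  fun _ ht h3 => mem_triplesIn.mpr ⟨i, ht, h3⟩

end TriplesIn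

theorem IsClique3.subset {α : Type*} {E : Finset (Finset α)} {S T : Finset α}
    (hS : IsClique3 E S) (hT : T ⊆ S) : IsClique3 E T :=
  fun t ht => hS t (ht.trans hT)

theorem IsClique3.card_lt {α : Type*} {E : Finset (Finset α)} {S : Finset α} {k : ℕ}
    (hS : IsClique3 E S) (hk : ∀ S' : Finset α, S'.card = k → ∃ t ⊆ S', t.card = 3 ∧ t ∉ E) :
    S.card < k := by
  by_contra! hSk
  obtain ⟨S', hS'S, hS'k⟩ := exists_subset_card_eq hSk
  obtain ⟨t, htS', ht3, htE⟩ := hk S' hS'k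
  exact htE ((hS.subset hS'S) t htS' ht3)

theorem Finset.exists_subset_of_card_add_three_eq {α ι : Type*} [Fintype α] [DecidableEq α]
    {G : ι → Finset α} (hG : ∀ a b c : α, ∃ j, a ∉ G j ∧ b ∉ G j ∧ c ∉ G j)
    {S : Finset α} (hS : S.card + 3 = Fintype.card α) : ∃ j, G j ⊆ S := by
  have hSc : Sᶜ.card = 3 := by rw [card_compl]; omega
  obtain ⟨a, b, c, -, -, -, habc⟩ := card_eq_three.mp hSc
  obtain ⟨j, ha, hb, hc⟩ := hG a b c
  refine ⟨j, fun v hv => ?_⟩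
  by_contra hvS
  have hv' : v ∈ ({a, b, c} : Finset α) := habc ▸ mem_compl.mpr hvS
  simp only [mem_insert, mem_singleton] at hv'
  rcases hv' with rfl | rfl | rfl <;> contradiction

namespace SzemerediPetruska

def missingVertices : Fin 10 → Finset (Fin 15) :=
  ![{0, 1, 2, 6}, {1, 3, 7, 10}, {5, 6, 7, 10}, {1, 2, 9, 10}, {2, 6, 7, 12},
    {1, 2, 4, 7}, {1, 6, 7, 8}, {1, 6, 10, 11}, {2, 6, 10, 13}, {2, 7, 10, 14}]

def maxClique (i : Fin 10) : Finset (Fin 15) := (missingVertices i)ᶜ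

def hypergraph : Finset (Finset (Fin 15)) := triplesIn maxClique

def nonEdge : Fin 20 → Finset (Fin 15) :=
  ![{0, 7, 10}, {1, 2, 5}, {1, 2, 6}, {1, 2, 7}, {1, 2, 10}, {1, 6, 7}, {1, 6, 10},
    {1, 6, 14}, {1, 7, 10}, {1, 7, 13}, {1, 10, 12}, {2, 3, 6}, {2, 6, 7}, {2, 6, 10},
    {2, 7, 10}, {2, 7, 11}, {2, 8, 10}, {4, 6, 10}, {6, 7, 9}, {6, 7, 10}]

theorem card_maxClique : ∀ i, (maxClique i).card = 11 := by decide

theorem exists_not_mem_maxClique : ∀ v, ∃ i, v ∉ maxClique i := by decide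

theorem card_nonEdge : ∀ j, (nonEdge j).card = 3 := by decide

theorem not_subset_maxClique : ∀ j i, ¬ nonEdge j ⊆ maxClique i := by decide

theorem nonEdge_not_mem_hypergraph (j : Fin 20) : nonEdge j ∉ hypergraph := fun h =>
  let ⟨i, hi, _⟩ := mem_triplesIn.mp h
  not_subset_maxClique j i hi

theorem exists_nonEdge_avoiding : ∀ a b c : Fin 15, ∃ j,
    a ∉ nonEdge j ∧ b ∉ nonEdge j ∧ c ∉ nonEdge j := by
  decide +kernel

theorem card_le_of_isClique3 {S : Finset (Fin 15)} (hS : IsClique3 hypergraph S) :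
    S.card ≤ 11 := by
  refine Nat.lt_succ_iff.mp (hS.card_lt fun S' hS' => ?_)
  obtain ⟨j, hj⟩ := exists_subset_of_card_add_three_eq exists_nonEdge_avoiding
    (by rw [hS', Fintype.card_fin])
  exact ⟨nonEdge j, hj, card_nonEdge j, nonEdge_not_mem_hypergraph j⟩

end SzemerediPetruska

open SzemerediPetruska in
/-- There is a 3-uniform hypergraph of order `n = 15` with clique number
`ω(H) = n − 4 = 11` whose maximum cliques have empty intersection; so the bound
`n ≤ (4+2 choose 2) = 15` of the Szemerédi–Petruska conjecture is attained for `m = 4`. -/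
theorem szemeredi_petruska_sharp_m_four :
    (∃ (α : Type) (inst : Fintype α) (E : Finset (Finset α)),
      (∀ e ∈ E, e.card = 3) ∧
      @Fintype.card α inst = 15 ∧
      (∃ S : Finset α, IsClique3 E S ∧ S.card = 11) ∧
      (∀ S : Finset α, IsClique3 E S → S.card ≤ 11) ∧
      (∀ v : α, ∃ S : Finset α, IsClique3 E S ∧ S.card = 11 ∧ v ∉ S)) ∧
    (4 + 2).choose 2 = 15 := by
  refine ⟨⟨Fin 15, inferInstance, hypergraph, fun _ => card_of_mem_triplesIn,
    Fintype.card_fin 15, ⟨_, isClique3_triplesIn _ 0, card_maxClique 0⟩,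
    fun _ => card_le_of_isClique3, fun v => ?_⟩, rfl⟩
  obtain ⟨i, hi⟩ := exists_not_mem_maxClique v
  exact ⟨_, isClique3_triplesIn _ i, card_maxClique i, hi⟩
end
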